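/- arXiv:1911.05256 — 3 statements merged into one kernel-verified Lean document; each statement's English description precedes it below -/
import Mathlib

section
/- Let G be a simple graph, let v be a vertex, let {i,j} be an edge of G, and let m be a natural number. Then the edge {i,j} is traversed by some closed walk of G that starts and ends at v and has length at most m if and only if i is reachable from v and d(v,i) + d(v,j) + 1 ≤ m, where d denotes graph distance. -/
/-!
A walk traversing `{i, j}` has the one-edge walk `i → j` or `j → i` as a contiguous piece, so its
length is at least `d(v, i) + 1 + d(j, v)` or `d(v, j) + 1 + d(i, v)`. Conversely, a geodesic from
`v` to `i`, the edge, and a geodesic from `j` back to `v` make a closed walk of exactly that length.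
-/

namespace SimpleGraph.Walk

variable {V : Type*} {G : SimpleGraph V}

theorem IsSubwalk.dist_add_length_add_dist_le {a b u w : V} {p : G.Walk a b} {q : G.Walk u w}
    (h : p.IsSubwalk q) : G.dist u a + p.length + G.dist b w ≤ q.length := by
  obtain ⟨r₁, r₂, rfl⟩ := h
  have h₁ := dist_le r₁
  have h₂ := dist_le r₂
  simp only [length_append]
  omega

theorem dist_add_dist_add_one_le_length_of_mem_edges {i j u w : V} {q : G.Walk u w}
    (he : s(i, j) ∈ q.edges) :
    G.dist u i + 1 + G.dist j w ≤ q.length ∨ G.dist u j + 1 + G.dist i w ≤ q.length := by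
  obtain h | h := (isSubwalk_toWalk_iff_mem_edges (q.adj_of_mem_edges he)).mpr he
  · exact .inl (by simpa using h.dist_add_length_add_dist_le)
  · exact .inr (by simpa using h.dist_add_length_add_dist_le)

end SimpleGraph.Walk

/-- An edge `{i, j}` of `G` is traversed by some closed walk at `v` of length at most `m`
if and only if `i` is reachable from `v` and `d(v, i) + d(v, j) + 1 ≤ m`. -/
theorem edge_mem_closed_walk_iff
    {V : Type*} (G : SimpleGraph V) (v i j : V) (m : ℕ) (hij : G.Adj i j) :
    (∃ p : G.Walk v v, p.length ≤ m ∧ s(i, j) ∈ p.edges) ↔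
      G.Reachable v i ∧ G.dist v i + G.dist v j + 1 ≤ m := by
  have hi : G.dist i v = G.dist v i := SimpleGraph.dist_comm
  have hj : G.dist j v = G.dist v j := SimpleGraph.dist_comm
  constructor
  · rintro ⟨p, hlen, he⟩
    obtain ⟨q, -, -⟩ :=
      SimpleGraph.Walk.mem_support_iff_exists_append.mp (p.fst_mem_support_of_mem_edges he)
    refine ⟨⟨q⟩, ?_⟩
    rcases SimpleGraph.Walk.dist_add_dist_add_one_le_length_of_mem_edges he with h | h <;> omega
  · rintro ⟨hvi, hlen⟩
    obtain ⟨p, hp⟩ := hvi.exists_walk_length_eq_dist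
    obtain ⟨q, hq⟩ := (hvi.trans hij.reachable).symm.exists_walk_length_eq_dist
    refine ⟨p.append (q.cons hij), ?_, by simp⟩
    simp only [SimpleGraph.Walk.length_append, SimpleGraph.Walk.length_cons, hp, hq]
    omega
end

section
/- Let G be a simple graph, v a vertex, and k a positive integer. Then the subgraph L_k(v) formed by all vertices and edges appearing in closed walks at v of length at most 2k+1 is exactly the induced subgraph of G on the k-hop neighbourhood of v: its vertex set is {u : u reachable from v and d(v,u) ≤ k}, and its edge set consists of all edges of G both of whose endpoints lie in that vertex set. -/
/-- The subgraph of `G` formed by all vertices and edges appearing in some closed walk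
at `v` of length at most `m`. -/
def walkSubgraph {V : Type*} (G : SimpleGraph V) (v : V) (m : ℕ) : G.Subgraph where
  verts := {u | ∃ p : G.Walk v v, p.length ≤ m ∧ u ∈ p.support}
  Adj i j := ∃ p : G.Walk v v, p.length ≤ m ∧ s(i, j) ∈ p.edges
  adj_sub := fun ⟨p, _, he⟩ => p.adj_of_mem_edges he
  edge_vert := fun ⟨p, hl, he⟩ => ⟨p, hl, p.fst_mem_support_of_mem_edges he⟩
  symm := ⟨fun i j ⟨p, hl, he⟩ => ⟨p, hl, by rwa [Sym2.eq_swap] at he⟩⟩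

/-! A closed walk at `v` through `u` has length at least `2 d(v,u)`, and going to `u` along a
shortest path and back attains this bound. Likewise an edge `ij` with both ends at distance at
most `k` lies on the closed walk `v ⇝ i — j ⇝ v` of length at most `2k + 1`. -/

namespace SimpleGraph

variable {V : Type*} {G : SimpleGraph V}

theorem Walk.dist_add_dist_le_length {u w x : V} (p : G.Walk u w) (hx : x ∈ p.support) :
    G.dist u x + G.dist x w ≤ p.length := by
  classical
  rw [← p.take_spec hx, Walk.length_append]
  exact Nat.add_le_add (dist_le _) (dist_le _)

theorem mem_walkSubgraph_verts_iff {v u : V} {m : ℕ} :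
    u ∈ (walkSubgraph G v m).verts ↔ G.Reachable v u ∧ 2 * G.dist v u ≤ m := by
  classical
  constructor
  · rintro ⟨p, hpm, hu⟩
    have hlen := p.dist_add_dist_le_length hu
    rw [dist_comm (u := u)] at hlen
    exact ⟨⟨p.takeUntil u hu⟩, by omega⟩
  · rintro ⟨hr, hm⟩
    obtain ⟨p, hp⟩ := hr.exists_walk_length_eq_dist
    refine ⟨p.append p.reverse, ?_, by simp⟩
    rw [Walk.length_append, Walk.length_reverse, hp]
    omega

theorem walkSubgraph_mono {v : V} {m n : ℕ} (hmn : m ≤ n) :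
    walkSubgraph G v m ≤ walkSubgraph G v n :=
  ⟨fun _ ⟨p, hp, hu⟩ => ⟨p, hp.trans hmn, hu⟩,
    fun _ _ ⟨p, hp, he⟩ => ⟨p, hp.trans hmn, he⟩⟩

theorem walkSubgraph_adj_of_reachable {v i j : V} (hij : G.Adj i j) (hi : G.Reachable v i)
    (hj : G.Reachable v j) : (walkSubgraph G v (G.dist v i + G.dist v j + 1)).Adj i j := by
  obtain ⟨p, hp⟩ := hi.exists_walk_length_eq_dist
  obtain ⟨q, hq⟩ := hj.exists_walk_length_eq_dist
  refine ⟨p.append (Walk.cons hij q.reverse), ?_, by simp⟩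
  rw [Walk.length_append, Walk.length_cons, Walk.length_reverse, hp, hq]
  omega

end SimpleGraph

open SimpleGraph in
theorem walkSubgraph_L_eq_induced_k_hop_general
    {V : Type*} (G : SimpleGraph V) (v : V) (k : ℕ) :
    (walkSubgraph G v (2 * k + 1)).verts =
        {u | G.Reachable v u ∧ G.dist v u ≤ k} ∧
      ∀ i j, (walkSubgraph G v (2 * k + 1)).Adj i j ↔
        G.Adj i j ∧ (G.Reachable v i ∧ G.dist v i ≤ k) ∧
          (G.Reachable v j ∧ G.dist v j ≤ k) := by
  have hverts : ∀ u, u ∈ (walkSubgraph G v (2 * k + 1)).verts ↔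
      G.Reachable v u ∧ G.dist v u ≤ k := fun u => by
    rw [mem_walkSubgraph_verts_iff]
    exact and_congr_right' (by omega)
  refine ⟨Set.ext hverts, fun i j => ⟨fun h => ?_, fun ⟨hij, ⟨hi, hdi⟩, ⟨hj, hdj⟩⟩ => ?_⟩⟩
  · exact ⟨h.adj_sub, (hverts i).1 h.fst_mem, (hverts j).1 h.snd_mem⟩
  · exact (walkSubgraph_mono (by omega)).2 (walkSubgraph_adj_of_reachable hij hi hj)

/-- For `k ≥ 1`, the subgraph `L_k(v)` formed by all vertices and edges in closed walks
at `v` of length at most `2k + 1` is exactly the induced subgraph of `G` on the `k`-hop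
neighbourhood of `v`: its vertex set is the set of vertices reachable from `v` at
distance at most `k`, and its edges are the edges of `G` with both endpoints in this
vertex set. -/
theorem walkSubgraph_L_eq_induced_k_hop
    {V : Type*} (G : SimpleGraph V) (v : V) (k : ℕ) (hk : 1 ≤ k) :
    (walkSubgraph G v (2 * k + 1)).verts =
        {u | G.Reachable v u ∧ G.dist v u ≤ k} ∧
      ∀ i j, (walkSubgraph G v (2 * k + 1)).Adj i j ↔
        G.Adj i j ∧ (G.Reachable v i ∧ G.dist v i ≤ k) ∧
          (G.Reachable v j ∧ G.dist v j ≤ k) :=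
  walkSubgraph_L_eq_induced_k_hop_general G v k
end

section
/- Let n be a positive integer and let S and T be multisets of real numbers, each of cardinality n. If the power sums agree up to order n, i.e. for every i with 1 ≤ i ≤ n one has Σ_{x ∈ S} x^i = Σ_{x ∈ T} x^i (sums taken with multiplicity), then S = T as multisets. -/
/-!
Newton's identities `k e_k = ± ∑_{i<k} ± e_i p_{k-i}` determine the elementary symmetric
functions `e_1, …, e_n` of a multiset from its power sums `p_1, …, p_n`, since `k` is invertible
in characteristic zero. By Vieta, these `e_k` are the coefficients of `∏ (X - x)`, whose roots
give back the multiset.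
-/

open Finset Polynomial

namespace Multiset

variable {R : Type*} [CommRing R]

theorem univ_val_map_toList_get {α : Type*} (s : Multiset α) :
    (univ : Finset (Fin s.toList.length)).val.map s.toList.get = s := by
  rw [Fin.univ_val_map, List.ofFn_get, coe_toList]

theorem mul_esymm_eq_sum (s : Multiset R) (k : ℕ) :
    k * s.esymm k = (-1) ^ (k + 1) *
      ∑ i ∈ Finset.range k, (-1) ^ i * s.esymm i * (s.map (· ^ (k - i))).sum := by
  have power_sum (j : ℕ) : ∑ x, s.toList.get x ^ j = (s.map (· ^ j)).sum := by
    conv_rhs => rw [← univ_val_map_toList_get s, map_map]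
    rfl
  have newton := congrArg (MvPolynomial.aeval s.toList.get)
    (MvPolynomial.mul_esymm_eq_sum (Fin s.toList.length) R k)
  simp only [map_mul, map_sum, map_pow, map_neg, map_one, map_natCast,
    MvPolynomial.aeval_esymm_eq_multiset_esymm, univ_val_map_toList_get, MvPolynomial.psum,
    MvPolynomial.aeval_X, power_sum] at newton
  rw [newton, sum_filter, Nat.sum_antidiagonal_eq_sum_range_succ_mk, sum_range_succ,
    if_neg (lt_irrefl k), add_zero]
  exact congrArg _ (sum_congr rfl fun i hi => if_pos (mem_range.mp hi))

theorem esymm_eq_of_sum_map_pow_eq [NoZeroDivisors R] [CharZero R] {s t : Multiset R} {n : ℕ}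
    (h : ∀ i : ℕ, 1 ≤ i → i ≤ n → (s.map (· ^ i)).sum = (t.map (· ^ i)).sum) :
    ∀ k ≤ n, s.esymm k = t.esymm k := by
  intro k
  induction k using Nat.strong_induction_on with
  | _ k ih =>
    intro hk
    rcases Nat.eq_zero_or_pos k with rfl | hk₀
    · simp only [esymm, powersetCard_zero_left, map_singleton, prod_zero, sum_singleton]
    · have lower_terms_eq :
          ∑ i ∈ Finset.range k, (-1) ^ i * s.esymm i * (s.map (· ^ (k - i))).sum =
          ∑ i ∈ Finset.range k, (-1) ^ i * t.esymm i * (t.map (· ^ (k - i))).sum := by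
        refine sum_congr rfl fun i hi => ?_
        have hik := mem_range.mp hi
        rw [ih i hik (by omega), h (k - i) (by omega) (by omega)]
      apply mul_left_cancel₀ (Nat.cast_ne_zero.mpr hk₀.ne' : (k : R) ≠ 0)
      rw [mul_esymm_eq_sum, mul_esymm_eq_sum, lower_terms_eq]

theorem eq_of_card_eq_of_esymm_eq [IsDomain R] {s t : Multiset R} (hcard : card s = card t)
    (h : ∀ k ≤ card s, s.esymm k = t.esymm k) : s = t := by
  rw [← roots_multiset_prod_X_sub_C s, ← roots_multiset_prod_X_sub_C t,
    prod_X_sub_X_eq_sum_esymm, prod_X_sub_X_eq_sum_esymm, ← hcard]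
  congr 1
  refine sum_congr rfl fun k hk => ?_
  rw [h k (Nat.lt_succ_iff.mp (mem_range.mp hk))]

end Multiset

theorem multiset_eq_of_power_sums_eq_general
    (n : ℕ) (S T : Multiset ℝ)
    (hS : Multiset.card S = n) (hT : Multiset.card T = n)
    (hpow : ∀ i : ℕ, 1 ≤ i → i ≤ n → (S.map (· ^ i)).sum = (T.map (· ^ i)).sum) :
    S = T :=
  Multiset.eq_of_card_eq_of_esymm_eq (hS.trans hT.symm) fun k hk =>
    Multiset.esymm_eq_of_sum_map_pow_eq hpow k (hS ▸ hk)

/-- If two multisets of real numbers, each of cardinality `n ≥ 1`, have equal power sums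
of all orders `i` with `1 ≤ i ≤ n`, then they are equal as multisets. -/
theorem multiset_eq_of_power_sums_eq
    (n : ℕ) (hn : 0 < n) (S T : Multiset ℝ)
    (hS : Multiset.card S = n) (hT : Multiset.card T = n)
    (hpow : ∀ i : ℕ, 1 ≤ i → i ≤ n → (S.map (· ^ i)).sum = (T.map (· ^ i)).sum) :
    S = T :=
  multiset_eq_of_power_sums_eq_general n S T hS hT hpow
end
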